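/- Let (K_d)_{d∈ℕ} be a sequence where K_d ⊆ ℝ^d is an isotropic convex body with isotropic constant L_{K_d}, and let (A_d), (B_d) be positive reals satisfying lim_{d→∞} min{A_d·√d·L_{K_d}, B_d·d·L_{K_d}²} = 0. Then lim_{d→∞} sup_{f ∈ C¹_d(A_d,B_d,K_d)} |∫_{K_d} f(x) dx − f(0)| = 0; in particular, the curse of dimensionality does not hold for C¹_d(A_d,B_d,K_d). -/
import Mathlib


open MeasureTheory Filter
open scoped RealInnerProductSpace

noncomputable section

set_option maxHeartbeats 1000000 in
theorem stmt14
    (K : (d : ℕ) → Set (EuclideanSpace ℝ (Fin d))) (L : ℕ → ℝ)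
    -- each `K d` is a convex body ...
    (hKcompact : ∀ d, IsCompact (K d)) (hKconv : ∀ d, Convex ℝ (K d))
    (hKint : ∀ d, (interior (K d)).Nonempty)
    -- ... which is isotropic with isotropic constant `L d`:
    (hKvol : ∀ d, volume (K d) = 1)
    (hKbary : ∀ d, ∫ x in K d, x = 0)
    (hL : ∀ d, 0 < L d)
    (hKiso : ∀ d, ∀ θ : EuclideanSpace ℝ (Fin d), ‖θ‖ = 1 →
      ∫ x in K d, ⟪x, θ⟫ ^ 2 = (L d) ^ 2)
    -- the Lipschitz parameters, with `lim_{d→∞} min{A_d √d L_d, B_d d L_d²} = 0`: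
    (A B : ℕ → ℝ) (hA : ∀ d, 0 < A d) (hB : ∀ d, 0 < B d)
    (hlim : Tendsto (fun d : ℕ =>
      min (A d * Real.sqrt d * L d) (B d * d * (L d) ^ 2)) atTop (nhds 0)) :
    -- `lim_{d→∞} sup_{f ∈ C¹_d(A_d, B_d, K_d)} |∫_{K_d} f(x) dx − f(0)| = 0`,
    -- the class consisting of functions continuously differentiable on `K_d`
    -- (with derivative `g` within `K_d`):
    Tendsto (fun d : ℕ =>
      sSup {v : ℝ |
        ∃ (f : EuclideanSpace ℝ (Fin d) → ℝ)
          (g : EuclideanSpace ℝ (Fin d) → (EuclideanSpace ℝ (Fin d) →L[ℝ] ℝ)),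
          (∀ x ∈ K d, HasFDerivWithinAt f (g x) (K d) x) ∧
          ContinuousOn g (K d) ∧
          (∀ x ∈ K d, |f x| ≤ 1) ∧
          (∀ x ∈ K d, ∀ y ∈ K d, |f x - f y| ≤ A d * ‖x - y‖) ∧
          (∀ x ∈ K d, ∀ y ∈ K d, ‖g x - g y‖ ≤ B d * ‖x - y‖) ∧
          v = |(∫ x in K d, f x) - f 0|})
      atTop (nhds 0) := by
  set S : ℕ → Set ℝ := fun d => {v : ℝ |
        ∃ (f : EuclideanSpace ℝ (Fin d) → ℝ)
          (g : EuclideanSpace ℝ (Fin d) → (EuclideanSpace ℝ (Fin d) →L[ℝ] ℝ)),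
          (∀ x ∈ K d, HasFDerivWithinAt f (g x) (K d) x) ∧
          ContinuousOn g (K d) ∧
          (∀ x ∈ K d, |f x| ≤ 1) ∧
          (∀ x ∈ K d, ∀ y ∈ K d, |f x - f y| ≤ A d * ‖x - y‖) ∧
          (∀ x ∈ K d, ∀ y ∈ K d, ‖g x - g y‖ ≤ B d * ‖x - y‖) ∧
          v = |(∫ x in K d, f x) - f 0|} with hS
  set m : ℕ → ℝ := fun d => min (A d * Real.sqrt d * L d) (B d * d * (L d) ^ 2) with hm
  -- basic facts for each dimension
  have hmeas : ∀ d, MeasurableSet (K d) := fun d => (hKcompact d).isClosed.measurableSet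
  have hprob : ∀ d, IsProbabilityMeasure (volume.restrict (K d)) := by
    intro d
    exact ⟨by rw [Measure.restrict_apply_univ, hKvol]⟩
  have hid_int : ∀ d, IntegrableOn (fun x : EuclideanSpace ℝ (Fin d) => x) (K d) volume :=
    fun d => ContinuousOn.integrableOn_compact (hKcompact d) continuousOn_id
  have h0K : ∀ d, (0 : EuclideanSpace ℝ (Fin d)) ∈ K d := by
    intro d
    have := hprob d
    have hmem : (∫ x in K d, x) ∈ K d :=
      (hKconv d).integral_mem (hKcompact d).isClosed
        ((ae_restrict_mem (hmeas d)).mono fun x hx => hx) (hid_int d)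
    rwa [hKbary d] at hmem
  -- second moment
  have hnormsq : ∀ d (x : EuclideanSpace ℝ (Fin d)), ‖x‖ ^ 2 = ∑ i, (x i) ^ 2 := by
    intro d x
    rw [EuclideanSpace.norm_eq, Real.sq_sqrt (by positivity)]
    simp [sq_abs]
  have hsq_int : ∀ d, IntegrableOn (fun x : EuclideanSpace ℝ (Fin d) => ‖x‖ ^ 2) (K d) volume :=
    fun d => ContinuousOn.integrableOn_compact (hKcompact d)
      (by fun_prop)
  have hnorm_int : ∀ d, IntegrableOn (fun x : EuclideanSpace ℝ (Fin d) => ‖x‖) (K d) volume :=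
    fun d => ContinuousOn.integrableOn_compact (hKcompact d) (by fun_prop)
  have hmom2 : ∀ d, ∫ x in K d, ‖x‖ ^ 2 = d * L d ^ 2 := by
    intro d
    have hcoord : ∀ i : Fin d, ∫ x in K d, (x i) ^ 2 = L d ^ 2 := by
      intro i
      have h1 : ‖(EuclideanSpace.single i (1:ℝ) : EuclideanSpace ℝ (Fin d))‖ = 1 := by
        simp
      have := hKiso d (EuclideanSpace.single i (1:ℝ)) h1
      simpa [EuclideanSpace.inner_single_right] using this
    have hint : ∀ i ∈ Finset.univ, IntegrableOn
        (fun x : EuclideanSpace ℝ (Fin d) => (x i) ^ 2) (K d) volume := by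
      intro i _
      exact ContinuousOn.integrableOn_compact (hKcompact d)
        (by fun_prop)
    calc ∫ x in K d, ‖x‖ ^ 2 = ∫ x in K d, ∑ i, (x i) ^ 2 := by
          simp_rw [hnormsq d]
      _ = ∑ i, ∫ x in K d, (x i) ^ 2 := integral_finset_sum Finset.univ hint
      _ = ∑ _i : Fin d, L d ^ 2 := by simp_rw [hcoord]
      _ = d * L d ^ 2 := by simp [mul_comm]
  -- first moment bound (Cauchy-Schwarz)
  have hmom1 : ∀ d, ∫ x in K d, ‖x‖ ≤ Real.sqrt d * L d := by
    intro d
    have := hprob d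
    set c : ℝ := ∫ x in K d, ‖x‖ with hc
    have hc0 : 0 ≤ c := integral_nonneg fun x => norm_nonneg x
    have hvar : 0 ≤ ∫ x in K d, (‖x‖ - c) ^ 2 :=
      integral_nonneg fun x => sq_nonneg _
    have hexp : ∫ x in K d, (‖x‖ - c) ^ 2 = (∫ x in K d, ‖x‖ ^ 2) - c ^ 2 := by
      have h1 : ∀ x : EuclideanSpace ℝ (Fin d),
          (‖x‖ - c) ^ 2 = ‖x‖ ^ 2 - 2 * c * ‖x‖ + c ^ 2 := by intro x; ring
      simp_rw [h1]
      have hint1 : IntegrableOn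
          (fun x : EuclideanSpace ℝ (Fin d) => ‖x‖ ^ 2 - 2 * c * ‖x‖) (K d) volume :=
        ContinuousOn.integrableOn_compact (hKcompact d) (by fun_prop)
      rw [integral_add hint1 (integrable_const _),
          integral_sub (hsq_int d) ((hnorm_int d).const_mul (2 * c)),
          integral_const_mul, integral_const]
      simp [← hc]
      ring
    have hcsq : c ^ 2 ≤ (d : ℝ) * L d ^ 2 := by
      have := hmom2 d
      nlinarith [hvar, hexp]
    have hsd : (Real.sqrt d * L d) ^ 2 = (d : ℝ) * L d ^ 2 := by
      rw [mul_pow, Real.sq_sqrt (Nat.cast_nonneg d)]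
    have : c ≤ Real.sqrt ((d : ℝ) * L d ^ 2) :=
      (Real.le_sqrt hc0 (by positivity)).2 hcsq
    rwa [Real.sqrt_mul (Nat.cast_nonneg d), Real.sqrt_sq (hL d).le] at this
  -- main bound: every element of S d is at most m d
  have key : ∀ d, ∀ v ∈ S d, v ≤ m d := by
    intro d v hv
    obtain ⟨f, g, hderiv, hgcont, _hb, hlipf, hlipg, hveq⟩ := hv
    have := hprob d
    have hfc : ContinuousOn f (K d) := fun x hx => (hderiv x hx).continuousWithinAt
    have hfint : IntegrableOn f (K d) volume :=
      ContinuousOn.integrableOn_compact (hKcompact d) hfc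
    -- bound 1
    have hb1 : v ≤ A d * Real.sqrt d * L d := by
      have heq : (∫ x in K d, f x) - f 0 = ∫ x in K d, (f x - f 0) := by
        rw [integral_sub hfint (integrable_const (f 0)), integral_const]
        simp
      have habs : |∫ x in K d, (f x - f 0)| ≤ ∫ x in K d, |f x - f 0| := by
        simpa [Real.norm_eq_abs] using
          norm_integral_le_integral_norm (μ := volume.restrict (K d))
            (fun x : EuclideanSpace ℝ (Fin d) => f x - f 0)
      have hmono : ∫ x in K d, |f x - f 0| ≤ ∫ x in K d, A d * ‖x‖ := by
        apply integral_mono_of_nonneg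
          (Eventually.of_forall fun x => abs_nonneg _)
          ((hnorm_int d).const_mul (A d))
        filter_upwards [ae_restrict_mem (hmeas d)] with x hx
        simpa using hlipf x hx 0 (h0K d)
      have : ∫ x in K d, A d * ‖x‖ ≤ A d * (Real.sqrt d * L d) := by
        rw [integral_const_mul]
        exact mul_le_mul_of_nonneg_left (hmom1 d) (hA d).le
      rw [hveq, heq]
      calc |∫ x in K d, (f x - f 0)| ≤ ∫ x in K d, |f x - f 0| := habs
        _ ≤ ∫ x in K d, A d * ‖x‖ := hmono
        _ ≤ A d * (Real.sqrt d * L d) := this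
        _ = A d * Real.sqrt d * L d := by ring
    -- bound 2
    have hb2 : v ≤ B d * d * L d ^ 2 := by
      have hpt : ∀ x ∈ K d, |f x - f 0 - g 0 x| ≤ B d * ‖x‖ ^ 2 := by
        intro x hx
        have hsub : segment ℝ 0 x ⊆ K d := (hKconv d).segment_subset (h0K d) hx
        have hbound : ∀ y ∈ segment ℝ 0 x, ‖g y - g 0‖ ≤ B d * ‖x‖ := by
          intro y hy
          have hyle : ‖y‖ ≤ ‖x‖ := by
            have hball : segment ℝ 0 x ⊆ Metric.closedBall 0 ‖x‖ :=
              (convex_closedBall (0 : EuclideanSpace ℝ (Fin d)) ‖x‖).segment_subset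
                (by simp) (by simp)
            simpa [mem_closedBall_zero_iff] using hball hy
          calc ‖g y - g 0‖ ≤ B d * ‖y - 0‖ := hlipg y (hsub hy) 0 (h0K d)
            _ = B d * ‖y‖ := by rw [sub_zero]
            _ ≤ B d * ‖x‖ := mul_le_mul_of_nonneg_left hyle (hB d).le
        have := Convex.norm_image_sub_le_of_norm_hasFDerivWithin_le'
          (f := f) (f' := g) (φ := g 0) (C := B d * ‖x‖)
          (fun y hy => (hderiv y (hsub hy)).mono hsub) hbound
          (convex_segment 0 x) (left_mem_segment ℝ 0 x) (right_mem_segment ℝ 0 x)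
        rw [sub_zero] at this
        calc |f x - f 0 - g 0 x| ≤ B d * ‖x‖ * ‖x‖ := this
          _ = B d * ‖x‖ ^ 2 := by ring
      have hgx_int : IntegrableOn (fun x : EuclideanSpace ℝ (Fin d) => g 0 x) (K d) volume :=
        ContinuousOn.integrableOn_compact (hKcompact d) ((g 0).continuous.continuousOn)
      have hsplit : (∫ x in K d, f x) - f 0 = ∫ x in K d, (f x - f 0 - g 0 x) := by
        have hg0 : ∫ x in K d, g 0 x = 0 := by
          have := ContinuousLinearMap.integral_comp_comm (g 0) (hid_int d)
          rw [hKbary d] at this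
          rw [this, map_zero]
        have hfs : IntegrableOn (fun x : EuclideanSpace ℝ (Fin d) => f x - f 0) (K d) volume :=
          hfint.sub (integrable_const _)
        rw [integral_sub hfs hgx_int,
            integral_sub hfint (integrable_const _), integral_const, hg0]
        simp
      have habs : |∫ x in K d, (f x - f 0 - g 0 x)| ≤ ∫ x in K d, |f x - f 0 - g 0 x| := by
        simpa [Real.norm_eq_abs] using
          norm_integral_le_integral_norm (μ := volume.restrict (K d))
            (fun x : EuclideanSpace ℝ (Fin d) => f x - f 0 - g 0 x)
      have hmono : ∫ x in K d, |f x - f 0 - g 0 x| ≤ ∫ x in K d, B d * ‖x‖ ^ 2 := by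
        apply integral_mono_of_nonneg
          (Eventually.of_forall fun x => abs_nonneg _)
          ((hsq_int d).const_mul (B d))
        filter_upwards [ae_restrict_mem (hmeas d)] with x hx
        exact hpt x hx
      rw [hveq, hsplit]
      calc |∫ x in K d, (f x - f 0 - g 0 x)| ≤ ∫ x in K d, |f x - f 0 - g 0 x| := habs
        _ ≤ ∫ x in K d, B d * ‖x‖ ^ 2 := hmono
        _ = B d * (d * L d ^ 2) := by rw [integral_const_mul, hmom2 d]
        _ = B d * d * L d ^ 2 := by ring
    exact le_min hb1 hb2
  have hm0 : ∀ d, 0 ≤ m d := by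
    intro d
    exact le_min
      (mul_nonneg (mul_nonneg (hA d).le (Real.sqrt_nonneg _)) (hL d).le)
      (mul_nonneg (mul_nonneg (hB d).le (Nat.cast_nonneg d)) (sq_nonneg _))
  have h0S : ∀ d, (0 : ℝ) ∈ S d := by
    intro d
    refine ⟨fun _ => 0, fun _ => 0, ?_, continuousOn_const, ?_, ?_, ?_, ?_⟩
    · intro x _; exact hasFDerivWithinAt_const 0 x (K d)
    · intro x _; simp
    · intro x _ y _
      simp only [sub_self, abs_zero]
      exact mul_nonneg (hA d).le (norm_nonneg _)
    · intro x _ y _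
      simp only [sub_self, norm_zero]
      exact mul_nonneg (hB d).le (norm_nonneg _)
    · simp
  have hbdd : ∀ d, BddAbove (S d) := fun d => ⟨m d, fun v hv => key d v hv⟩
  apply squeeze_zero (fun d => le_csSup (hbdd d) (h0S d))
    (fun d => Real.sSup_le (key d) (hm0 d)) hlim

end
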